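/- Let H(x,y) = y²/2 + x²/2 + x⁴/4. Then x⁶ y dx = (4/3·H·x² + 32/21·x² − 16/21·H)·y dx + (2/3·x³y − 8/7·x y)·dH − d(2/9·x³y³ − 8/21·x y³) as polynomial 1-forms on ℝ². -/

import Mathlib

/-- partial derivative in the first variable -/
noncomputable def pdx (F : ℝ → ℝ → ℝ) (x y : ℝ) : ℝ := deriv (fun t => F t y) x

/-- partial derivative in the second variable -/
noncomputable def pdy (F : ℝ → ℝ → ℝ) (x y : ℝ) : ℝ := deriv (fun t => F x t) y

noncomputable def H (x y : ℝ) : ℝ := y^2/2 + x^2/2 + x^4/4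

/-! Since dH = (x + x³) dx + y dy, comparing the coefficients of dx and dy turns the identity
of 1-forms into two polynomial identities once the partial derivatives are computed. -/

theorem pdx_H (x y : ℝ) : pdx H x y = x + x ^ 3 := by
  simp (disch := fun_prop) only [pdx, H, deriv_fun_add, deriv_div_const, deriv_const,
    deriv_pow_field]
  ring

theorem pdy_H (x y : ℝ) : pdy H x y = y := by
  simp only [pdy, H, deriv_add_const, deriv_div_const, deriv_pow_field]
  ring

theorem pdx_cube_mul_cube_sub_mul_cube (a b x y : ℝ) :
    pdx (fun x y => a * x ^ 3 * y ^ 3 - b * x * y ^ 3) x y = 3 * a * x ^ 2 * y ^ 3 - b * y ^ 3 := by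
  simp (disch := fun_prop) only [pdx, deriv_fun_sub, deriv_mul_const_field,
    deriv_const_mul_field, deriv_pow_field, deriv_const_mul_id]
  ring

theorem pdy_cube_mul_cube_sub_mul_cube (a b x y : ℝ) :
    pdy (fun x y => a * x ^ 3 * y ^ 3 - b * x * y ^ 3) x y =
      3 * a * x ^ 3 * y ^ 2 - 3 * b * x * y ^ 2 := by
  simp (disch := fun_prop) only [pdy, deriv_fun_sub, deriv_const_mul_field, deriv_pow_field]
  ring

/-- (i4):  x⁶y dx = (4/3·H·x² + 32/21·x² − 16/21·H)·y dx + (2/3·x³y − 8/7·xy)·dH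
    − d(2/9·x³y³ − 8/21·xy³) -/
theorem decomposition_i4 : ∀ x y : ℝ,
    x^6 * y = (4/3 * H x y * x^2 + 32/21 * x^2 - 16/21 * H x y) * y
      + (2/3 * x^3 * y - 8/7 * x * y) * pdx H x y
      - pdx (fun x y => 2/9 * x^3 * y^3 - 8/21 * x * y^3) x y
  ∧ (0 : ℝ) = (2/3 * x^3 * y - 8/7 * x * y) * pdy H x y
      - pdy (fun x y => 2/9 * x^3 * y^3 - 8/21 * x * y^3) x y := by
  intro x y
  rw [pdx_H, pdy_H, pdx_cube_mul_cube_sub_mul_cube, pdy_cube_mul_cube_sub_mul_cube]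
  constructor
  · rw [H]
    ring
  · ring
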